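/- In the marked cycle on Z_k with start 0 and end x (0 < x < k), if exactly one marked node i_1 satisfies x < i_1 < k, then the path c^{i_1} b a^{i_1 − x} is a valid path of length 2 i_1 − x + 1, provided all marked nodes other than i_1 lie in {0,1,…,x}. -/
import Mathlib


/-- The four move types in the marked cycle. -/
inductive Move : Type
  | a | b | c | d
deriving DecidableEq

/-- Where a move from node `x` in `ZMod k` leads. -/
def Move.step {k : ℕ} (x : ZMod k) : Move → ZMod k
  | .a => x - 1
  | .b => x
  | .c => x + 1
  | .d => x

/-- The node covered by a move performed from node `x`. -/
def Move.covers {k : ℕ} (x : ZMod k) : Move → ZMod k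
  | .a => x - 1
  | .b => x
  | .c => x
  | .d => x - 1

/-- The node reached after performing a sequence of moves starting at `s`. -/
def endAt {k : ℕ} (s : ZMod k) : List Move → ZMod k
  | [] => s
  | m :: ms => endAt (Move.step s m) ms

/-- The set of nodes covered by a sequence of moves starting at `s`. -/
def coveredSet {k : ℕ} (s : ZMod k) : List Move → Set (ZMod k)
  | [] => ∅
  | m :: ms => insert (Move.covers s m) (coveredSet (Move.step s m) ms)

/-- A valid path in the marked cycle on `ZMod k` with marked set `B`, start `s`,
end `t`: a nonempty sequence of moves from `s` to `t` covering every node of `B`. -/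
def ValidPath {k : ℕ} (B : Set (ZMod k)) (s t : ZMod k) (p : List Move) : Prop :=
  p ≠ [] ∧ endAt s p = t ∧ B ⊆ coveredSet s p

/-- A shortest valid path: valid and of minimum length among all valid paths. -/
def ShortestPath {k : ℕ} (B : Set (ZMod k)) (s t : ZMod k) (p : List Move) : Prop :=
  ValidPath B s t p ∧ ∀ q : List Move, ValidPath B s t q → p.length ≤ q.length

lemma myEndAt_append {k : ℕ} (s : ZMod k) (p q : List Move) :
    endAt s (p ++ q) = endAt (endAt s p) q := by
  induction p generalizing s with
  | nil => simp [endAt]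
  | cons m ms ih => simp [endAt, ih]

lemma myEndAt_rep_c {k : ℕ} (s : ZMod k) (n : ℕ) :
    endAt s (List.replicate n Move.c) = s + n := by
  induction n generalizing s with
  | zero => simp [endAt]
  | succ n ih =>
    rw [List.replicate_succ]
    simp only [endAt, Move.step, ih]
    push_cast; ring

lemma myEndAt_rep_a {k : ℕ} (s : ZMod k) (n : ℕ) :
    endAt s (List.replicate n Move.a) = s - n := by
  induction n generalizing s with
  | zero => simp [endAt]
  | succ n ih =>
    rw [List.replicate_succ]
    simp only [endAt, Move.step, ih]
    push_cast; ring

lemma myCov_append {k : ℕ} (s : ZMod k) (p q : List Move) :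
    coveredSet s (p ++ q) = coveredSet s p ∪ coveredSet (endAt s p) q := by
  induction p generalizing s with
  | nil => simp [coveredSet, endAt]
  | cons m ms ih => simp [coveredSet, endAt, ih, Set.insert_union]

lemma myCov_rep_c {k : ℕ} (s : ZMod k) (n j : ℕ) (hj : j < n) :
    s + (j : ZMod k) ∈ coveredSet s (List.replicate n Move.c) := by
  induction n generalizing s j with
  | zero => omega
  | succ n ih =>
    rw [List.replicate_succ]
    simp only [coveredSet, Move.covers, Move.step]
    rcases Nat.eq_zero_or_pos j with h | h
    · subst h; simp
    · right
      obtain ⟨j', rfl⟩ := Nat.exists_eq_succ_of_ne_zero (by omega : j ≠ 0)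
      have heq : s + ((j' + 1 : ℕ) : ZMod k) = (s + 1) + (j' : ZMod k) := by
        push_cast; ring
      rw [Nat.succ_eq_add_one, heq]
      exact ih (s + 1) j' (by omega)

/-- start 0, end x (0 < x < k); if i₁ is a marked node with
x < i₁ < k and all other marked nodes lie in {0,…,x}, then c^{i₁} b a^{i₁−x} is a
valid path of length 2i₁ − x + 1. -/
theorem one_turn_path_valid (k x i₁ : ℕ) (hk : 2 ≤ k) (hx : 0 < x) (hxi : x < i₁)
    (hik : i₁ < k) (B : Set (ZMod k)) (hi₁ : (i₁ : ZMod k) ∈ B)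
    (hB : ∀ y ∈ B, y.val ≤ x ∨ y = (i₁ : ZMod k)) :
    ValidPath B 0 (x : ZMod k)
      (List.replicate i₁ Move.c ++ [Move.b] ++ List.replicate (i₁ - x) Move.a) ∧
    (List.replicate i₁ Move.c ++ [Move.b] ++
      List.replicate (i₁ - x) Move.a).length = 2 * i₁ - x + 1 := by
  haveI : NeZero k := ⟨by omega⟩
  have hlen : (List.replicate i₁ Move.c ++ [Move.b] ++
      List.replicate (i₁ - x) Move.a).length = 2 * i₁ - x + 1 := by
    simp [List.length_append]; omega
  refine ⟨⟨by simp, ?_, ?_⟩, hlen⟩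
  · rw [myEndAt_append, myEndAt_append, myEndAt_rep_c]
    simp only [endAt, Move.step, myEndAt_rep_a]
    rw [zero_add, Nat.cast_sub (le_of_lt hxi)]
    ring
  · intro y hy
    rw [myCov_append, myCov_append, myEndAt_append, myEndAt_rep_c, zero_add]
    rcases hB y hy with h | rfl
    · left; left
      have hv : y = ((y.val : ℕ) : ZMod k) := by rw [ZMod.natCast_val, ZMod.cast_id]
      rw [hv]
      have := myCov_rep_c (0 : ZMod k) i₁ y.val (by omega)
      rwa [zero_add] at this
    · left; right
      simp [coveredSet, Move.covers]
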